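/- Let D be a strong digraph of order n = 2m+1 ≥ 5 that contains no cycle passing through all of its T-vertices, let C = x_1x_2…x_{n−1}x_1 be a cycle of length n−1 in D, let x be the unique vertex of D not on C, and suppose x and x_{n−1} are not adjacent; write y = x_{n−1} and p = n−2. Let x_{l_1}, x_{l_2}, …, x_{l_r} with 2 ≤ l_1 < l_2 < … < l_r ≤ p−1 be vertices each of which is adjacent to neither x nor y. Then the set {x, y, x_{l_1}, x_{l_2}, …, x_{l_r}} is an independent set of vertices of D. -/

import Mathlib

/-!
Basic framework: finite loopless digraphs (arcs may exist in both directions),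
degrees, adjacency, directed cycles (as injective maps from `ZMod k` respecting
arcs), strong and 2-strong connectivity, T-vertices, and the special digraphs
`D₅`, `D₇`, the classes `L₁`, `L₂`, etc. from the paper
"On Cycles through Vertices of Large Semidegree in Digraphs".
-/

/-- A digraph: a loopless arc relation (arcs `u → v`; both `uv` and `vu` allowed). -/
structure Dgr (V : Type*) where
  Arc : V → V → Prop
  loopless : ∀ v, ¬ Arc v v

namespace Dgr

variable {V : Type*}

/-- Two vertices are adjacent if there is an arc between them in some direction. -/
def Adj (D : Dgr V) (u v : V) : Prop := D.Arc u v ∨ D.Arc v u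

/-- Out-degree `d⁺(u)`. -/
noncomputable def outDeg (D : Dgr V) (u : V) : ℕ := {v | D.Arc u v}.ncard

/-- In-degree `d⁻(u)`. -/
noncomputable def inDeg (D : Dgr V) (u : V) : ℕ := {v | D.Arc v u}.ncard

/-- Degree `d(u) = d⁺(u) + d⁻(u)`. -/
noncomputable def deg (D : Dgr V) (u : V) : ℕ := D.outDeg u + D.inDeg u

/-- `d⁺(u, A)`: number of out-neighbours of `u` in `A`. -/
noncomputable def outDegOn (D : Dgr V) (u : V) (A : Set V) : ℕ := {v ∈ A | D.Arc u v}.ncard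

/-- `d⁻(u, A)`: number of in-neighbours of `u` in `A`. -/
noncomputable def inDegOn (D : Dgr V) (u : V) (A : Set V) : ℕ := {v ∈ A | D.Arc v u}.ncard

/-- `d(u, A) = d⁺(u, A) + d⁻(u, A)`. -/
noncomputable def degOn (D : Dgr V) (u : V) (A : Set V) : ℕ := D.outDegOn u A + D.inDegOn u A

/-- In a digraph of order `2m+1`, a `T`-vertex is one with `d⁺(u) ≥ m` and `d⁻(u) ≥ m`. -/
def TVertex (D : Dgr V) (m : ℕ) (u : V) : Prop := m ≤ D.outDeg u ∧ m ≤ D.inDeg u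

/-- A directed cycle of length `k ≥ 2`, given as an injective map `c : ZMod k → V`
with an arc from each `c i` to `c (i+1)`. -/
def IsCycle (D : Dgr V) {k : ℕ} (c : ZMod k → V) : Prop :=
  2 ≤ k ∧ Function.Injective c ∧ ∀ i, D.Arc (c i) (c (i + 1))

/-- `D` has a (directed) cycle through all vertices of `S`. -/
def CycleThrough (D : Dgr V) (S : Set V) : Prop :=
  ∃ (k : ℕ) (c : ZMod k → V), D.IsCycle c ∧ S ⊆ Set.range c

/-- A Hamiltonian cycle: a cycle through all the vertices. -/
def Hamiltonian (D : Dgr V) [Fintype V] : Prop :=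
  ∃ c : ZMod (Fintype.card V) → V, D.IsCycle c ∧ Function.Surjective c

/-- `D` is strong: a directed path (walk) from `u` to `v` for every pair of
distinct vertices. -/
def Strong (D : Dgr V) : Prop :=
  ∀ u v : V, u ≠ v → Relation.TransGen D.Arc u v

/-- The induced subdigraph on a set `S` of vertices. -/
def restrict (D : Dgr V) (S : Set V) : Dgr S where
  Arc a b := D.Arc a b
  loopless v := D.loopless v

/-- `D` is 2-strong: at least 3 vertices, and deleting any single vertex leaves
a strong digraph. -/
def TwoStrong (D : Dgr V) [Fintype V] : Prop :=
  3 ≤ Fintype.card V ∧ ∀ w : V, (D.restrict {v | v ≠ w}).Strong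

/-- Isomorphism of digraphs. -/
def Iso (D : Dgr V) {W : Type*} (E : Dgr W) : Prop :=
  ∃ e : V ≃ W, ∀ a b : V, D.Arc a b ↔ E.Arc (e a) (e b)

end Dgr

/-- A digraph defined by a list of arcs. -/
def ofList {V : Type*} [DecidableEq V] (l : List (V × V)) (h : ∀ v : V, (v, v) ∉ l) :
    Dgr V where
  Arc a b := (a, b) ∈ l
  loopless v hv := h v hv

/-- Arcs of the digraph `D₅` (vertices `x₁,x₂,x₃ = 0,1,2`, `x = 3`, `y = 4`):
`N⁺(x₁)={x₂,y}`, `N⁺(x₂)={x₃,x}`, `N⁺(x₃)={x,y}`, `N⁺(x)={x₁,x₂}`, `N⁺(y)={x₁,x₃}`. -/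
def D5arcs : List (Fin 5 × Fin 5) :=
  [(0,1),(0,4),(1,2),(1,3),(2,3),(2,4),(3,0),(3,1),(4,0),(4,2)]

/-- The digraph `D₅`. -/
def D5 : Dgr (Fin 5) := ofList D5arcs (by decide)

/-- `L₁`: the three digraphs obtained from `D₅` by adding the arc `x₁x₃`, the arc
`x₃x₁`, or both. -/
def L1 : Set (Dgr (Fin 5)) :=
  {ofList ((0,2) :: D5arcs) (by decide),
   ofList ((2,0) :: D5arcs) (by decide),
   ofList ((0,2) :: (2,0) :: D5arcs) (by decide)}

/-- Arcs of the digraph `D₇` (vertices `x₁,…,x₅ = 0,…,4`, `x = 5`, `y = 6`):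
`N⁺(x₁)={x₂,x₅,y}`, `N⁺(x₂)={x₃,x₄,y}`, `N⁺(x₃)={x₂,x₄,x}`, `N⁺(x₄)={x₃,x₅,x}`,
`N⁺(x₅)={x₁,x,y}`, `N⁺(x)={x₁,x₂,x₃}`, `N⁺(y)={x₁,x₄,x₅}`. -/
def D7arcs : List (Fin 7 × Fin 7) :=
  [(0,1),(0,4),(0,6),(1,2),(1,3),(1,6),(2,1),(2,3),(2,5),(3,2),(3,4),(3,5),
   (4,0),(4,5),(4,6),(5,0),(5,1),(5,2),(6,0),(6,3),(6,4)]

/-- The digraph `D₇`. -/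
def D7 : Dgr (Fin 7) := ofList D7arcs (by decide)

/-- Membership in the class `L₂`: there is an enumeration `x_1,…,x_{2m}, x` of the
vertices (here `b i = x_i`, indices mod `2m`, so `b 0 = x_{2m}`) such that
`x_1x_2⋯x_{2m}x_1` is a cycle, `x` and `x_{2m}` are nonadjacent,
`N⁺(x) = N⁺(x_{2m}) = {x_1,…,x_m}`, `N⁻(x) = N⁻(x_{2m}) = {x_m,…,x_{2m-1}}`,
and there is no arc from `{x_1,…,x_{m-1}}` to `{x_{m+1},…,x_{2m-1}}`. -/
def InL2 {V : Type*} (D : Dgr V) (m : ℕ) : Prop :=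
  ∃ (b : ZMod (2 * m) → V) (x : V),
    1 ≤ m ∧
    Function.Injective b ∧ x ∉ Set.range b ∧
    (∀ i, D.Arc (b i) (b (i + 1))) ∧
    ¬ D.Adj x (b 0) ∧
    {v | D.Arc x v} = (fun i : ℕ => b i) '' Set.Icc 1 m ∧
    {v | D.Arc (b 0) v} = (fun i : ℕ => b i) '' Set.Icc 1 m ∧
    {v | D.Arc v x} = (fun i : ℕ => b i) '' Set.Icc m (2 * m - 1) ∧
    {v | D.Arc v (b 0)} = (fun i : ℕ => b i) '' Set.Icc m (2 * m - 1) ∧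
    (∀ i ∈ Set.Icc 1 (m - 1), ∀ j ∈ Set.Icc (m + 1) (2 * m - 1),
      ¬ D.Arc (b (i : ℕ)) (b (j : ℕ)))

/-- `K*_{m,m+1} ⊆ D ⊆ [K_m + K̄_{m+1}]*` (containments as spanning subdigraphs):
the vertex set splits into `A` of size `m` and its complement of size `m+1`, all arcs
between `A` and `Aᶜ` are present in both directions, and there are no arcs inside `Aᶜ`. -/
def KSandwich {V : Type*} (D : Dgr V) (m : ℕ) : Prop :=
  ∃ A : Set V, A.ncard = m ∧ Aᶜ.ncard = m + 1 ∧
    (∀ a ∈ A, ∀ b ∈ Aᶜ, D.Arc a b ∧ D.Arc b a) ∧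
    (∀ u ∈ Aᶜ, ∀ v ∈ Aᶜ, ¬ D.Arc u v)

/-- Alternative (iv) of Theorem 2: `D` has a cycle `C = z_1 z_2 ⋯ z_{2m} z_1` of length
`2m` such that, with `z` the vertex off the cycle, at least `3` vertices of the cycle
are nonadjacent to `z`, and every cycle vertex `z_l` nonadjacent to `z` satisfies
`z_{l-1}z, z z_{l+1} ∈ A(D)`, `N⁺(z) = N⁺(z_l)` and `N⁻(z) = N⁻(z_l)`; in particular
these vertices together with `z` form an independent set. -/
def PropIV {V : Type*} (D : Dgr V) (m : ℕ) : Prop :=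
  ∃ (c : ZMod (2 * m) → V) (z : V),
    D.IsCycle c ∧ z ∉ Set.range c ∧
    3 ≤ {i : ZMod (2 * m) | ¬ D.Adj z (c i)}.ncard ∧
    (∀ i : ZMod (2 * m), ¬ D.Adj z (c i) →
      D.Arc (c (i - 1)) z ∧ D.Arc z (c (i + 1)) ∧
      {v | D.Arc z v} = {v | D.Arc (c i) v} ∧
      {v | D.Arc v z} = {v | D.Arc v (c i)}) ∧
    (insert z (c '' {i | ¬ D.Adj z (c i)})).Pairwise (fun a b => ¬ D.Adj a b)

/-!
Let `z` be the vertex off a cycle `c` of length `2m`. Then `z` is a T-vertex (otherwise `c`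
already passes through all T-vertices) and `z` cannot be inserted between two consecutive
vertices of `c`, so counting its at least `2m` arcs to `c` shows that for every `i` exactly one
of `c i → z` and `z → c (i + 1)` holds. Consequently a vertex `c j` nonadjacent to `z` can be
replaced by `z` on the cycle, as `c (j - 1) → z → c (j + 1)`; the new cycle misses `c j`, and
the same reasoning applies to it. Applying this to `x`, to `y = b 0` and to `b l`, `b l'` with
`2 ≤ l < l' ≤ 2m - 2`, an arc between `b l` and `b l'` would close a Hamiltonian cycle: writing
`x_i = b i` and `y = x₀`, either `x x_{l+1} … x_{l'-1} y x₁ … x_l x_{l'} … x_{2m-1} x` or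
`x x_{l'+1} … x_{2m-1} x_{l'} x_l x₁ … x_{l-1} y x_{l+1} … x_{l'-1} x`.
-/

theorem List.nodup_of_forall_mem_of_length_le {α : Type*} [Fintype α] {l : List α}
    (hl : ∀ a, a ∈ l) (hlen : l.length ≤ Fintype.card α) : l.Nodup := by
  classical
  have hperm := (Finset.univ.nodup_toList.subperm fun a _ => hl a).perm_of_length_le
    (by simpa using hlen)
  exact hperm.nodup_iff.1 Finset.univ.nodup_toList

theorem List.isChain_cons_map_Ico_append {α : Type*} {R : α → α → Prop} {f : ℕ → α}
    (hf : ∀ t, R (f t) (f (t + 1))) {a : α} {L : List α} {i j : ℕ} (hij : i < j)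
    (ha : R a (f i)) (hL : (f (j - 1) :: L).IsChain R) :
    (a :: ((List.Ico i j).map f ++ L)).IsChain R := by
  induction h : j - i generalizing a i with
  | zero => omega
  | succ d ih =>
    rw [List.Ico.eq_cons hij, List.map_cons, List.cons_append, List.isChain_cons_cons]
    refine ⟨ha, ?_⟩
    rcases Nat.lt_or_ge (i + 1) j with hi | hi
    · exact ih hi (hf i) (by omega)
    · obtain rfl : j = i + 1 := by omega
      simpa using hL

theorem ZMod.natCast_ne_zero_of_pos_of_lt {n t : ℕ} (h₀ : 0 < t) (h : t < n) :
    (t : ZMod n) ≠ 0 := by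
  rw [Ne, ZMod.natCast_eq_zero_iff]
  exact Nat.not_dvd_of_pos_of_lt h₀ h

theorem ZMod.natCast_ne_zero_and_ne_one_and_add_one_ne_zero {n t : ℕ} (h₁ : 2 ≤ t)
    (h₂ : t + 2 ≤ n) : (t : ZMod n) ≠ 0 ∧ (t : ZMod n) ≠ 1 ∧ (t : ZMod n) + 1 ≠ 0 := by
  refine ⟨natCast_ne_zero_of_pos_of_lt (by omega) (by omega), ?_, ?_⟩
  · rw [Ne, ← sub_eq_zero, ← Nat.cast_pred (by omega)]
    exact natCast_ne_zero_of_pos_of_lt (by omega) (by omega)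
  · rw [← Nat.cast_succ]
    exact natCast_ne_zero_of_pos_of_lt (by omega) (by omega)

namespace Dgr

variable {V : Type*} {D : Dgr V}

theorem adj_comm {u v : V} : D.Adj u v ↔ D.Adj v u := or_comm

def CanReplace (D : Dgr V) {k : ℕ} (c : ZMod k → V) (j : ZMod k) (z : V) : Prop :=
  D.Arc (c (j - 1)) z ∧ D.Arc z (c (j + 1))

theorem cycleThrough_of_isChain [Fintype V] {a : V} {l : List V}
    (hchain : (a :: (l ++ [a])).IsChain D.Arc) (hl : ∀ v, v ∈ a :: l)
    (hlen : l.length < Fintype.card V) (S : Set V) : D.CycleThrough S := by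
  have hnodup := List.nodup_of_forall_mem_of_length_le hl (by simpa using hlen)
  have hne : l ≠ [] := by
    rintro rfl
    exact D.loopless a (List.isChain_pair.1 hchain)
  have harc := List.isChain_iff_getElem.1 hchain
  have hget : ∀ t (ht : t < l.length + 1),
      (a :: (l ++ [a]))[t]'(by simp; omega) = (a :: l)[t] := by
    rintro (_ | t) ht
    · rfl
    · exact List.getElem_append_left _
  -- `ZMod (l.length + 1)` unfolds to `Fin (l.length + 1)`.
  refine ⟨l.length + 1, (a :: l).get, ⟨?_, List.nodup_iff_injective_get.1 hnodup, ?_⟩,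
    fun v _ => List.mem_iff_get.1 (hl v)⟩
  · have := List.length_pos_iff.2 hne
    omega
  · intro (i : Fin (l.length + 1))
    show D.Arc (a :: l)[i.val] (a :: l)[(i + 1 : Fin (l.length + 1)).val]
    by_cases h : i = Fin.last l.length
    · subst h
      simpa [hget] using harc l.length (by simp)
    · have hi : (i + 1).val = i.val + 1 := by rw [Fin.val_add_one, if_neg h]
      have hlt : i.val < l.length := by simpa using Fin.val_lt_last h
      have := harc i.val (by simp; omega)
      rw [hget _ (by omega), hget _ (by omega)] at this
      simpa only [hi] using this

theorem cycleThrough_of_isChain_map [Fintype V] {f : ℕ → V} {n : ℕ} {x : V}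
    (hcover : ∀ v, v = x ∨ ∃ t < n, f t = v) (hcard : Fintype.card V = n + 1)
    {P : List ℕ} (hP : ∀ t < n, t ∈ P) (hlen : P.length = n)
    (hchain : (x :: (P.map f ++ [x])).IsChain D.Arc) (S : Set V) : D.CycleThrough S := by
  refine cycleThrough_of_isChain hchain (fun v => ?_) (by simp [hlen, hcard]) S
  rcases hcover v with rfl | ⟨t, ht, rfl⟩
  · exact List.mem_cons_self
  · exact List.mem_cons_of_mem _ (List.mem_map_of_mem (hP t ht))

theorem cycleThrough_of_forward_chord [Fintype V] {f : ℕ → V}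
    (hf : ∀ t, D.Arc (f t) (f (t + 1))) {n : ℕ} {x : V}
    (hcover : ∀ v, v = x ∨ ∃ t < n, f t = v) (hcard : Fintype.card V = n + 1)
    {lo hi : ℕ} (hgap : lo + 2 ≤ hi) (hhi : hi < n)
    (h₁ : D.Arc x (f (lo + 1))) (h₂ : D.Arc (f (hi - 1)) (f 0))
    (hchord : D.Arc (f lo) (f hi)) (h₃ : D.Arc (f (n - 1)) x) (S : Set V) :
    D.CycleThrough S := by
  refine cycleThrough_of_isChain_map hcover hcard
    (P := List.Ico (lo + 1) hi ++ (List.Ico 0 (lo + 1) ++ List.Ico hi n))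
    (fun t ht => by simp only [List.mem_append, List.Ico.mem]; omega)
    (by simp only [List.length_append, List.Ico.length]; omega) ?_ S
  simp only [List.map_append, List.append_assoc]
  refine List.isChain_cons_map_Ico_append hf (by omega) h₁ ?_
  refine List.isChain_cons_map_Ico_append hf (by omega) h₂ ?_
  refine List.isChain_cons_map_Ico_append hf (by omega) (by simpa using hchord) ?_
  exact List.isChain_pair.2 h₃

theorem cycleThrough_of_backward_chord [Fintype V] {f : ℕ → V}
    (hf : ∀ t, D.Arc (f t) (f (t + 1))) {n : ℕ} {x : V}
    (hcover : ∀ v, v = x ∨ ∃ t < n, f t = v) (hcard : Fintype.card V = n + 1)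
    {lo hi : ℕ} (hlo : 2 ≤ lo) (hgap : lo + 2 ≤ hi) (hhi : hi + 2 ≤ n)
    (h₁ : D.Arc x (f (hi + 1))) (h₂ : D.Arc (f (n - 1)) (f hi)) (hchord : D.Arc (f hi) (f lo))
    (h₃ : D.Arc (f lo) (f 1)) (h₄ : D.Arc (f (lo - 1)) (f 0)) (h₅ : D.Arc (f 0) (f (lo + 1)))
    (h₆ : D.Arc (f (hi - 1)) x) (S : Set V) : D.CycleThrough S := by
  refine cycleThrough_of_isChain_map hcover hcard
    (P := List.Ico (hi + 1) n ++ ([hi, lo] ++ (List.Ico 1 lo ++ ([0] ++ List.Ico (lo + 1) hi))))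
    (fun t ht => by simp only [List.mem_append, List.Ico.mem, List.mem_cons]; omega)
    (by simp only [List.length_append, List.Ico.length, List.length_cons, List.length_nil]; omega)
    ?_ S
  simp only [List.map_append, List.map_cons, List.append_assoc, List.cons_append,
    List.nil_append]
  refine List.isChain_cons_map_Ico_append hf (by omega) h₁ ?_
  refine List.isChain_cons_cons.2 ⟨h₂, List.isChain_cons_cons.2 ⟨hchord, ?_⟩⟩
  refine List.isChain_cons_map_Ico_append hf (by omega) h₃ ?_
  refine List.isChain_cons_cons.2 ⟨h₄, ?_⟩
  refine List.isChain_cons_map_Ico_append hf (by omega) h₅ ?_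
  exact List.isChain_pair.2 h₆

namespace IsCycle

variable {k : ℕ} {c : ZMod k → V}

theorem neZero (hc : D.IsCycle c) : NeZero k := ⟨by have := hc.1; omega⟩

theorem eq_or_mem_range [Fintype V] (hc : D.IsCycle c) (hcard : Fintype.card V = k + 1)
    {z : V} (hz : z ∉ Set.range c) (v : V) : v = z ∨ v ∈ Set.range c := by
  classical
  have := hc.neZero
  have huniv : insert z (Finset.univ.image c) = Finset.univ := by
    refine Finset.eq_univ_of_card _ ?_
    rw [Finset.card_insert_of_notMem (by simpa using hz),
      Finset.card_image_of_injective _ hc.2.1, Finset.card_univ, ZMod.card, hcard]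
  simpa [← huniv] using Finset.mem_univ v

theorem eq_or_exists_natCast_eq [Fintype V] (hc : D.IsCycle c)
    (hcard : Fintype.card V = k + 1) {z : V} (hz : z ∉ Set.range c) (v : V) :
    v = z ∨ ∃ t < k, c t = v := by
  have := hc.neZero
  refine (hc.eq_or_mem_range hcard hz v).imp_right fun ⟨j, hj⟩ => ⟨j.val, ZMod.val_lt j, ?_⟩
  rw [ZMod.natCast_zmod_val, hj]

theorem cycleThrough_of_arc_of_arc [Fintype V] (hc : D.IsCycle c) (hcard : Fintype.card V = k + 1)
    {z : V} (hz : z ∉ Set.range c) {i : ZMod k} (h₁ : D.Arc (c i) z)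
    (h₂ : D.Arc z (c (i + 1))) (S : Set V) : D.CycleThrough S := by
  have := hc.neZero
  set f : ℕ → V := fun t => c (i + 1 + t)
  have hf : ∀ t, D.Arc (f t) (f (t + 1)) := fun t => by
    simpa [f, add_assoc] using hc.2.2 (i + 1 + t)
  refine cycleThrough_of_isChain (a := z) (l := (List.Ico 0 k).map f)
    (List.isChain_cons_map_Ico_append hf (NeZero.pos k) (by simpa [f] using h₂) ?_) ?_
    (by simp [hcard]) S
  · have hlast : f (k - 1) = c i := by
      simp [f, Nat.cast_pred (NeZero.pos k)]
    simpa [hlast] using h₁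
  · intro v
    rcases hc.eq_or_mem_range hcard hz v with rfl | ⟨j, rfl⟩
    · exact List.mem_cons_self
    · refine List.mem_cons_of_mem _ (List.mem_map.2 ⟨(j - (i + 1)).val, ?_, ?_⟩)
      · simpa [List.Ico.mem] using ZMod.val_lt _
      · simp [f]

theorem update (hc : D.IsCycle c) {z : V} (hz : z ∉ Set.range c) {j : ZMod k}
    (h : D.CanReplace c j z) : D.IsCycle (Function.update c j z) := by
  refine ⟨hc.1, ?_, ?_⟩
  · intro i i' hii'
    by_cases hi : i = j <;> by_cases hi' : i' = j
    · rw [hi, hi']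
    · rw [hi, Function.update_self, Function.update_of_ne hi'] at hii'
      exact absurd ⟨i', hii'.symm⟩ hz
    · rw [hi', Function.update_self, Function.update_of_ne hi] at hii'
      exact absurd ⟨i, hii'⟩ hz
    · rw [Function.update_of_ne hi, Function.update_of_ne hi'] at hii'
      exact hc.2.1 hii'
  · intro i
    have : Fact (1 < k) := ⟨hc.1⟩
    by_cases hi : i = j
    · subst hi
      simpa using h.2
    · by_cases hi' : i + 1 = j
      · subst hi'
        simpa [hi] using h.1
      · simpa [hi, hi'] using hc.2.2 i

theorem apply_notMem_range_update (hc : D.IsCycle c) {z : V} (hz : z ∉ Set.range c)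
    (j : ZMod k) : c j ∉ Set.range (Function.update c j z) := by
  rintro ⟨i, hi⟩
  by_cases h : i = j
  · subst h
    exact hz ⟨i, by simpa using hi.symm⟩
  · simp only [Function.update_of_ne h] at hi
    exact h (hc.2.1 hi)

theorem cycleThrough_of_adj_of_canReplace [Fintype V] (hc : D.IsCycle c)
    (hcard : Fintype.card V = k + 1) {z : V} (hz : z ∉ Set.range c) {lo hi : ℕ} (hlo : 2 ≤ lo)
    (hgap : lo + 2 ≤ hi) (hhi : hi + 2 ≤ k) (hz₀ : D.CanReplace c 0 z)
    (hzlo : D.CanReplace c lo z) (hzhi : D.CanReplace c hi z)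
    (hlo₀ : D.CanReplace c lo (c 0)) (hhi₀ : D.CanReplace c hi (c 0))
    (h₀lo : D.CanReplace c 0 (c lo)) (h₀hi : D.CanReplace c 0 (c hi))
    (hadj : D.Adj (c lo) (c hi)) (S : Set V) : D.CycleThrough S := by
  set f : ℕ → V := fun t => c t
  have hf : ∀ t, D.Arc (f t) (f (t + 1)) := fun t => by simpa [f] using hc.2.2 t
  have hcover := hc.eq_or_exists_natCast_eq hcard hz
  have hsucc : ∀ t : ℕ, f (t + 1) = c (t + 1) := fun t => by simp [f]
  have hpred : ∀ t : ℕ, 0 < t → f (t - 1) = c (t - 1) := fun t ht => by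
    simp [f, Nat.cast_pred ht]
  have hzero : f 0 = c 0 := by simp [f]
  have hone : f 1 = c (0 + 1) := by simp [f]
  have hlast : f (k - 1) = c (0 - 1) := by
    simpa [ZMod.natCast_self] using hpred k (by omega)
  rcases hadj with hchord | hchord
  · refine cycleThrough_of_forward_chord hf hcover hcard hgap (by omega) ?_ ?_ hchord ?_ S
    · rw [hsucc]; exact hzlo.2
    · rw [hpred hi (by omega), hzero]; exact hhi₀.1
    · rw [hlast]; exact hz₀.1
  · refine cycleThrough_of_backward_chord hf hcover hcard hlo hgap hhi ?_ ?_ hchord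
      ?_ ?_ ?_ ?_ S
    · rw [hsucc]; exact hzhi.2
    · rw [hlast]; exact h₀hi.1
    · rw [hone]; exact h₀lo.2
    · rw [hpred lo (by omega), hzero]; exact hlo₀.1
    · rw [hzero, hsucc]; exact hlo₀.2
    · rw [hpred hi (by omega)]; exact hzhi.1

theorem arc_iff_not_arc_succ [Fintype V] {m : ℕ} {c : ZMod (2 * m) → V} (hc : D.IsCycle c)
    (hcard : Fintype.card V = 2 * m + 1) (hT : ¬ D.CycleThrough {u | D.TVertex m u})
    {z : V} (hz : z ∉ Set.range c) (i : ZMod (2 * m)) :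
    D.Arc (c i) z ↔ ¬ D.Arc z (c (i + 1)) := by
  have := hc.neZero
  have hcov := hc.eq_or_mem_range hcard hz
  have hzT : D.TVertex m z := by
    by_contra h
    exact hT ⟨_, c, hc, fun u hu => (hcov u).resolve_left (by rintro rfl; exact h hu)⟩
  have hdisj : Disjoint {i | D.Arc (c i) z} {i | D.Arc z (c (i + 1))} :=
    Set.disjoint_left.2 fun i h₁ h₂ => hT (hc.cycleThrough_of_arc_of_arc hcard hz h₁ h₂ _)
  have hin : {i | D.Arc (c i) z}.ncard = D.inDeg z :=
    Set.ncard_preimage_of_injective_subset_range (s := {v | D.Arc v z}) hc.2.1 fun v hv =>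
      (hcov v).resolve_left fun h => D.loopless z (h ▸ hv)
  have hout : {i | D.Arc z (c (i + 1))}.ncard = D.outDeg z := by
    refine Set.ncard_preimage_of_injective_subset_range (f := fun i => c (i + 1))
      (s := {v | D.Arc z v}) (hc.2.1.comp (add_left_injective 1)) fun v hv => ?_
    obtain ⟨j, rfl⟩ := (hcov v).resolve_left fun h => D.loopless z (h ▸ hv)
    exact ⟨j - 1, by simp⟩
  have huniv : {i | D.Arc (c i) z} ∪ {i | D.Arc z (c (i + 1))} = Set.univ := by
    refine Set.eq_of_subset_of_ncard_le (Set.subset_univ _) ?_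
    rw [Set.ncard_union_eq hdisj, hin, hout, Set.ncard_univ, Nat.card_zmod]
    exact (two_mul m).trans_le (add_le_add hzT.2 hzT.1)
  refine ⟨fun h₁ h₂ => Set.disjoint_left.1 hdisj h₁ h₂, fun h => ?_⟩
  have hi : i ∈ {i | D.Arc (c i) z} ∪ {i | D.Arc z (c (i + 1))} := huniv ▸ Set.mem_univ i
  simpa [h] using hi

end IsCycle

section NoCycleThroughTVertices

variable [Fintype V] {m : ℕ} {b : ZMod (2 * m) → V} {x : V}

theorem canReplace_of_not_adj (hb : D.IsCycle b) (hcard : Fintype.card V = 2 * m + 1)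
    (hT : ¬ D.CycleThrough {u | D.TVertex m u}) (hx : x ∉ Set.range b) {j : ZMod (2 * m)}
    (h : ¬ D.Adj x (b j)) : D.CanReplace b j x := by
  have hiff := hb.arc_iff_not_arc_succ hcard hT hx
  refine ⟨(hiff (j - 1)).2 ?_, not_not.1 fun h' => h (Or.inr ((hiff j).2 h'))⟩
  rw [sub_add_cancel]
  exact fun h' => h (Or.inl h')

theorem canReplace_of_canReplace (hb : D.IsCycle b) (hcard : Fintype.card V = 2 * m + 1)
    (hT : ¬ D.CycleThrough {u | D.TVertex m u}) (hx : x ∉ Set.range b) {j j' : ZMod (2 * m)}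
    (hj : D.CanReplace b j x) (hadj : ¬ D.Adj (b j) (b j')) (h₁ : j' ≠ j) (h₂ : j' ≠ j + 1)
    (h₃ : j ≠ j' + 1) : D.CanReplace b j' (b j) := by
  have hiff := (hb.update hx hj).arc_iff_not_arc_succ hcard hT
    (hb.apply_notMem_range_update hx j)
  have h₂' : j' - 1 ≠ j := fun h => h₂ (by rw [← h, sub_add_cancel])
  constructor
  · have := (hiff (j' - 1)).2
    simp only [sub_add_cancel, Function.update_of_ne h₂', Function.update_of_ne h₁] at this
    exact this fun h => hadj (Or.inl h)
  · have := (hiff j').2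
    simp only [Function.update_of_ne h₁, Function.update_of_ne h₃.symm] at this
    exact not_not.1 fun h => hadj (Or.inr (this h))

theorem not_adj_of_shared_non_neighbours (hb : D.IsCycle b)
    (hcard : Fintype.card V = 2 * m + 1)
    (hT : ¬ D.CycleThrough {u | D.TVertex m u}) (hx : x ∉ Set.range b) (hxy : ¬ D.Adj x (b 0))
    {lo hi : ℕ} (hlo : 2 ≤ lo) (hlohi : lo < hi) (hhi : hi ≤ 2 * m - 2)
    (hxlo : ¬ D.Adj (b lo) x) (hylo : ¬ D.Adj (b lo) (b 0))
    (hxhi : ¬ D.Adj (b hi) x) (hyhi : ¬ D.Adj (b hi) (b 0)) :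
    ¬ D.Adj (b lo) (b hi) := by
  obtain ⟨hlo₀, hlo₁, hlo₂⟩ :=
    ZMod.natCast_ne_zero_and_ne_one_and_add_one_ne_zero (n := 2 * m) hlo (by omega)
  obtain ⟨hhi₀, hhi₁, hhi₂⟩ :=
    ZMod.natCast_ne_zero_and_ne_one_and_add_one_ne_zero (n := 2 * m) (t := hi) (by omega) (by omega)
  rw [← zero_add 1] at hlo₁ hhi₁
  have rx₀ := canReplace_of_not_adj hb hcard hT hx hxy
  have rxlo := canReplace_of_not_adj hb hcard hT hx (adj_comm.not.1 hxlo)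
  have rxhi := canReplace_of_not_adj hb hcard hT hx (adj_comm.not.1 hxhi)
  have rylo := canReplace_of_canReplace hb hcard hT hx rx₀ (adj_comm.not.1 hylo)
    hlo₀ hlo₁ hlo₂.symm
  have ryhi := canReplace_of_canReplace hb hcard hT hx rx₀ (adj_comm.not.1 hyhi)
    hhi₀ hhi₁ hhi₂.symm
  have rloy := canReplace_of_canReplace hb hcard hT hx rxlo hylo hlo₀.symm hlo₂.symm hlo₁
  have rhiy := canReplace_of_canReplace hb hcard hT hx rxhi hyhi hhi₀.symm hhi₂.symm hhi₁
  have hgap : lo + 2 ≤ hi := by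
    by_contra hgap
    obtain rfl : hi = lo + 1 := by omega
    exact hyhi (Or.inr (by simpa using rylo.2))
  exact fun hadj => hT (hb.cycleThrough_of_adj_of_canReplace hcard hx hlo hgap (by omega)
    rx₀ rxlo rxhi rylo ryhi rloy rhiy hadj _)

end NoCycleThroughTVertices

end Dgr

theorem statement12_general {V : Type*} [Fintype V] (m : ℕ) (D : Dgr V)
    (hcard : Fintype.card V = 2 * m + 1)
    (hnocyc : ¬ D.CycleThrough {u | D.TVertex m u})
    (b : ZMod (2 * m) → V) (hb : D.IsCycle b)
    (x : V) (hx : x ∉ Set.range b)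
    (hxy : ¬ D.Adj x (b 0))
    (r : ℕ) (l : Fin r → ℕ)
    (hl1 : ∀ i, 2 ≤ l i) (hl2 : ∀ i, l i ≤ 2 * m - 2)
    (hnadjx : ∀ i, ¬ D.Adj (b (l i : ZMod (2 * m))) x)
    (hnadjy : ∀ i, ¬ D.Adj (b (l i : ZMod (2 * m))) (b 0)) :
    (insert x (insert (b 0) (Set.range fun i => b (l i : ZMod (2 * m))))).Pairwise
      (fun a c => ¬ D.Adj a c) := by
  have : Std.Symm fun a c => ¬ D.Adj a c := ⟨fun _ _ => Dgr.adj_comm.not.1⟩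
  refine .insert_of_symm (.insert_of_symm ?_ ?_) ?_
  · rintro _ ⟨i, rfl⟩ _ ⟨j, rfl⟩ hne
    have hij : l i ≠ l j := fun h => hne (by simp [h])
    rcases hij.lt_or_gt with h | h
    · exact Dgr.not_adj_of_shared_non_neighbours hb hcard hnocyc hx hxy (hl1 i) h (hl2 j)
        (hnadjx i) (hnadjy i) (hnadjx j) (hnadjy j)
    · exact Dgr.adj_comm.not.1 (Dgr.not_adj_of_shared_non_neighbours hb hcard hnocyc hx hxy
        (hl1 j) h (hl2 i) (hnadjx j) (hnadjy j) (hnadjx i) (hnadjy i))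
  · rintro _ ⟨i, rfl⟩ -
    exact Dgr.adj_comm.not.1 (hnadjy i)
  · rintro _ (rfl | ⟨i, rfl⟩) -
    · exact hxy
    · exact Dgr.adj_comm.not.1 (hnadjx i)

/-- **Remark 2.** Setup as in Claim 3 (`b i = x_i`, `y = x_{n-1} = b 0`, `p = n-2 = 2m-1`).
Let `x_{l_1}, …, x_{l_r}` with `2 ≤ l_1 < l_2 < ⋯ < l_r ≤ p-1` be vertices each adjacent
to neither `x` nor `y`. Then `{x, y, x_{l_1}, …, x_{l_r}}` is an independent set. -/
theorem statement12 {V : Type*} [Fintype V] (m : ℕ) (D : Dgr V)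
    (hcard : Fintype.card V = 2 * m + 1) (hn : 5 ≤ 2 * m + 1)
    (hstrong : D.Strong)
    (hnocyc : ¬ D.CycleThrough {u | D.TVertex m u})
    (b : ZMod (2 * m) → V) (hb : D.IsCycle b)
    (x : V) (hx : x ∉ Set.range b)
    (hxy : ¬ D.Adj x (b 0))
    (r : ℕ) (l : Fin r → ℕ) (hmono : StrictMono l)
    (hl1 : ∀ i, 2 ≤ l i) (hl2 : ∀ i, l i ≤ 2 * m - 2)
    (hnadjx : ∀ i, ¬ D.Adj (b (l i : ZMod (2 * m))) x)
    (hnadjy : ∀ i, ¬ D.Adj (b (l i : ZMod (2 * m))) (b 0)) :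
    (insert x (insert (b 0) (Set.range fun i => b (l i : ZMod (2 * m))))).Pairwise
      (fun a c => ¬ D.Adj a c) :=
  statement12_general m D hcard hnocyc b hb x hx hxy r l hl1 hl2 hnadjx hnadjy
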